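/- arXiv:1409.8624 — 4 statements merged into one kernel-verified Lean document; each statement's English description precedes it below -/
import Mathlib

section
/- Let C and Λ be Hermitian positive semidefinite n×n complex matrices with CΛ = 0, and let Z_D be Hermitian positive definite. Define Z = (Z_D⁻¹ + Λ)⁻¹. Then (C + Z)Z⁻¹ = (C + Z_D)Z_D⁻¹, and consequently det(C + Z_D)/det(Z_D) = det(C + Z)/det(Z). -/
open Matrix ComplexOrder

namespace Matrix

variable {m R K : Type*} [Fintype m] [DecidableEq m]

theorem add_mul_nonsing_inv [CommRing R] (A : Matrix m m R) {B : Matrix m m R}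
    (hB : IsUnit B.det) : (A + B) * B⁻¹ = A * B⁻¹ + 1 := by
  rw [add_mul, mul_nonsing_inv B hB]

/-- Over a field no invertibility is needed, since `det B⁻¹ = (det B)⁻¹` holds with junk values too. -/
theorem det_mul_nonsing_inv [Field K] (A B : Matrix m m K) :
    (A * B⁻¹).det = A.det / B.det := by
  rw [det_mul, det_nonsing_inv, Ring.inverse_eq_inv', div_eq_mul_inv]

end Matrix

theorem enhanced_noise_det_ratio_general
    {n : ℕ} (C Λ ZD : Matrix (Fin n) (Fin n) ℂ)
    (hΛ : Λ.PosSemidef) (hCΛ : C * Λ = 0)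
    (hZD : ZD.PosDef) (Z : Matrix (Fin n) (Fin n) ℂ)
    (hZ : Z = (ZD⁻¹ + Λ)⁻¹) :
    (C + Z) * Z⁻¹ = (C + ZD) * ZD⁻¹ ∧
      (C + ZD).det / ZD.det = (C + Z).det / Z.det := by
  have hW : IsUnit (ZD⁻¹ + Λ).det :=
    (isUnit_iff_isUnit_det _).1 (hZD.inv.add_posSemidef hΛ).isUnit
  have hZD' : IsUnit ZD.det := (isUnit_iff_isUnit_det _).1 hZD.isUnit
  have hZinv : Z⁻¹ = ZD⁻¹ + Λ := hZ ▸ nonsing_inv_nonsing_inv _ hW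
  have hratio : (C + Z) * Z⁻¹ = (C + ZD) * ZD⁻¹ := by
    rw [add_mul_nonsing_inv C (hZ ▸ isUnit_nonsing_inv_det _ hW), add_mul_nonsing_inv C hZD',
      hZinv, mul_add, hCΛ, add_zero]
  refine ⟨hratio, ?_⟩
  rw [← det_mul_nonsing_inv, ← det_mul_nonsing_inv, hratio]

theorem enhanced_noise_det_ratio
    {n : ℕ} (C Λ ZD : Matrix (Fin n) (Fin n) ℂ)
    (hC : C.PosSemidef) (hΛ : Λ.PosSemidef) (hCΛ : C * Λ = 0)
    (hZD : ZD.PosDef) (Z : Matrix (Fin n) (Fin n) ℂ)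
    (hZ : Z = (ZD⁻¹ + Λ)⁻¹) :
    (C + Z) * Z⁻¹ = (C + ZD) * ZD⁻¹ ∧
      (C + ZD).det / ZD.det = (C + Z).det / Z.det :=
  enhanced_noise_det_ratio_general C Λ ZD hΛ hCΛ hZD Z hZ
end

section
/- Let S, C, Λ₂ be Hermitian n×n complex matrices with 0 ⪯ C ⪯ S, Λ₂ ⪰ 0, let Z_R and Z be Hermitian positive definite matrices satisfying (C + Z)⁻¹ = (C + Z_R)⁻¹ + Λ₂ and (S − C)Λ₂ = 0. Then (S + Z)(C + Z)⁻¹ = (S + Z_R)(C + Z_R)⁻¹, and consequently det(C + Z)/det(C + Z_R) = det(S + Z)/det(S + Z_R). -/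
/-! Writing `S + Z = (S - C) + (C + Z)` gives `(S + Z)(C + Z)⁻¹ = (S - C)(C + Z)⁻¹ + 1`.
Substituting the KKT identity `(C + Z)⁻¹ = (C + Z_R)⁻¹ + Λ₂`, the extra term `(S - C)Λ₂` vanishes
by complementary slackness, which leaves `(S + Z_R)(C + Z_R)⁻¹`. Taking determinants gives the
ratio identity. -/

open Matrix ComplexOrder

namespace Matrix

variable {ι : Type*} [Fintype ι] [DecidableEq ι]

theorem add_mul_nonsing_inv_of_isUnit_det {R : Type*} [CommRing R] (D : Matrix ι ι R)
    {P : Matrix ι ι R} (hP : IsUnit P.det) : (D + P) * P⁻¹ = D * P⁻¹ + 1 := by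
  rw [add_mul, mul_nonsing_inv P hP]

theorem add_mul_nonsing_inv_eq_of_nonsing_inv_eq_add {R : Type*} [CommRing R]
    {D P P' L : Matrix ι ι R} (hP : IsUnit P.det) (hP' : IsUnit P'.det)
    (hinv : P⁻¹ = P'⁻¹ + L) (hDL : D * L = 0) : (D + P) * P⁻¹ = (D + P') * P'⁻¹ := by
  rw [add_mul_nonsing_inv_of_isUnit_det D hP, add_mul_nonsing_inv_of_isUnit_det D hP', hinv,
    mul_add, hDL, add_zero]

theorem det_div_det_eq_of_mul_nonsing_inv_eq {K : Type*} [Field K] {A B A' B' : Matrix ι ι K}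
    (hB : B.det ≠ 0) (hA' : A'.det ≠ 0) (hB' : B'.det ≠ 0) (h : A * B⁻¹ = A' * B'⁻¹) :
    B.det / B'.det = A.det / A'.det := by
  have hdet : A.det / B.det = A'.det / B'.det := by
    simpa [det_mul, det_nonsing_inv, Ring.inverse_eq_inv', div_eq_mul_inv] using
      congrArg det h
  rw [div_eq_div_iff hB hB'] at hdet
  rw [div_eq_div_iff hB' hA']
  linear_combination -hdet

end Matrix

theorem enhanced_noise_det_ratio_upper_general
    {n : ℕ} (S C Λ₂ ZR Z : Matrix (Fin n) (Fin n) ℂ)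
    (hC : C.PosSemidef) (hCS : (S - C).PosSemidef)
    (hZR : ZR.PosDef) (hZ : Z.PosDef)
    (hKKT : (C + Z)⁻¹ = (C + ZR)⁻¹ + Λ₂)
    (hCS2 : (S - C) * Λ₂ = 0) :
    (S + Z) * (C + Z)⁻¹ = (S + ZR) * (C + ZR)⁻¹ ∧
      (C + Z).det / (C + ZR).det = (S + Z).det / (S + ZR).det := by
  have hsplit (W : Matrix (Fin n) (Fin n) ℂ) : S - C + (C + W) = S + W := by abel
  have hCZ : (C + Z).PosDef := PosDef.posSemidef_add hC hZ
  have hCZR : (C + ZR).PosDef := PosDef.posSemidef_add hC hZR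
  have hSZR : (S + ZR).PosDef := by
    simpa only [hsplit] using PosDef.posSemidef_add hCS hCZR
  have key : (S + Z) * (C + Z)⁻¹ = (S + ZR) * (C + ZR)⁻¹ := by
    simpa only [hsplit] using
      add_mul_nonsing_inv_eq_of_nonsing_inv_eq_add hCZ.det_pos.ne'.isUnit
        hCZR.det_pos.ne'.isUnit hKKT hCS2
  exact ⟨key, det_div_det_eq_of_mul_nonsing_inv_eq hCZ.det_pos.ne' hSZR.det_pos.ne'
    hCZR.det_pos.ne' key⟩

theorem enhanced_noise_det_ratio_upper
    {n : ℕ} (S C Λ₂ ZR Z : Matrix (Fin n) (Fin n) ℂ)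
    (hC : C.PosSemidef) (hCS : (S - C).PosSemidef) (hS : S.IsHermitian)
    (hΛ₂ : Λ₂.PosSemidef) (hZR : ZR.PosDef) (hZ : Z.PosDef)
    (hKKT : (C + Z)⁻¹ = (C + ZR)⁻¹ + Λ₂)
    (hCS2 : (S - C) * Λ₂ = 0) :
    (S + Z) * (C + Z)⁻¹ = (S + ZR) * (C + ZR)⁻¹ ∧
      (C + Z).det / (C + ZR).det = (S + Z).det / (S + ZR).det :=
  enhanced_noise_det_ratio_upper_general S C Λ₂ ZR Z hC hCS hZR hZ hKKT hCS2
end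

section
/- Let S, C be Hermitian positive semidefinite n×n matrices with C ⪯ S, let Z_R, Z_D be Hermitian positive definite, and let Λ₁, Λ₂ ⪰ 0 be Hermitian satisfying: (C + Z_D)⁻¹ + Λ₁ = (C + Z_R)⁻¹ + Λ₂, CΛ₁ = 0, and (S − C)Λ₂ = 0. Define Z = (Z_D⁻¹ + Λ₁)⁻¹. Then log det(C + Z_D) − log det(C + Z_R) = log det(S + Z) − log det(Z) − log det(S + Z_R) + log det(Z_D). -/
/-! Here `Z⁻¹ = Z_D⁻¹ + Λ₁`. Everything rests on one observation: if `A⁻¹ = B⁻¹ + Λ` and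
`X Λ = 0`, then `(X + A) A⁻¹ = X B⁻¹ + 1 = (X + B) B⁻¹`, hence
`det (X + A) · det B = det (X + B) · det A`.
With `X = C` and `Λ = Λ₁` this gives `det (C + Z) det Z_D = det (C + Z_D) det Z`. Since also
`Λ₁ C = 0`, the matrix `(C + Z_D)⁻¹ + Λ₁ = (C + Z_R)⁻¹ + Λ₂` is the inverse of `C + Z`, so with
`X = S - C` and `Λ = Λ₂` it gives `det (S + Z) det (C + Z_R) = det (S + Z_R) det (C + Z)`.
Taking logarithms and eliminating `log det (C + Z)` yields the claim. -/

open Matrix ComplexOrder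

namespace Matrix

variable {m R : Type*} [Fintype m]

theorem IsHermitian.mul_eq_zero_comm [NonUnitalNonAssocSemiring R] [StarRing R]
    {A B : Matrix m m R} (hA : A.IsHermitian) (hB : B.IsHermitian) :
    A * B = 0 ↔ B * A = 0 := by
  constructor <;> intro h <;>
    simpa only [conjTranspose_mul, hA.eq, hB.eq, conjTranspose_zero] using congrArg (·ᴴ) h

variable [DecidableEq m] [CommRing R]

theorem det_mul_eq_of_mul_inv_eq {X Y A B : Matrix m m R} (hA : IsUnit A.det)
    (hB : IsUnit B.det) (h : X * A⁻¹ = Y * B⁻¹) : X.det * B.det = Y.det * A.det := by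
  calc X.det * B.det = (X * A⁻¹ * A).det * B.det := by rw [nonsing_inv_mul_cancel_right A X hA]
    _ = Y.det * A.det * (B⁻¹ * B).det := by rw [h, det_mul, det_mul, det_mul]; ring
    _ = Y.det * A.det := by rw [nonsing_inv_mul _ hB, det_one, mul_one]

theorem add_mul_inv_eq_of_inv_eq_inv_add {X A B Λ : Matrix m m R} (hA : IsUnit A.det)
    (hB : IsUnit B.det) (hAB : A⁻¹ = B⁻¹ + Λ) (hX : X * Λ = 0) :
    (X + A) * A⁻¹ = (X + B) * B⁻¹ := by
  rw [add_mul, add_mul, mul_nonsing_inv _ hA, mul_nonsing_inv _ hB, hAB, mul_add, hX, add_zero]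

theorem det_add_mul_det_eq_of_inv_eq_inv_add {X A B Λ : Matrix m m R} (hA : IsUnit A.det)
    (hB : IsUnit B.det) (hAB : A⁻¹ = B⁻¹ + Λ) (hX : X * Λ = 0) : (X + A).det * B.det = (X + B).det * A.det :=
  det_mul_eq_of_mul_inv_eq hA hB (add_mul_inv_eq_of_inv_eq_inv_add hA hB hAB hX)

theorem inv_add_eq_of_inv_eq_inv_add {C D Z Λ : Matrix m m R} (hZ : IsUnit Z.det)
    (hD : IsUnit D.det) (hCD : IsUnit (C + D).det) (hZD : Z⁻¹ = D⁻¹ + Λ) (hCΛ : C * Λ = 0) (hΛC : Λ * C = 0) :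
    (C + Z)⁻¹ = (C + D)⁻¹ + Λ := by
  have hCZ : C + Z = (C + D) * D⁻¹ * Z := by
    rw [← add_mul_inv_eq_of_inv_eq_inv_add hZ hD hZD hCΛ, mul_assoc, nonsing_inv_mul _ hZ, mul_one]
  refine inv_eq_left_inv ?_
  calc ((C + D)⁻¹ + Λ) * (C + Z) = (C + D)⁻¹ * (C + D) * D⁻¹ * Z + Λ * Z := by
        rw [add_mul, mul_add Λ, hΛC, zero_add, hCZ, mul_assoc, mul_assoc, mul_assoc]
    _ = Z⁻¹ * Z := by rw [nonsing_inv_mul _ hCD, one_mul, hZD, add_mul]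
    _ = 1 := nonsing_inv_mul _ hZ

end Matrix

theorem Complex.log_re_add_log_re_eq_of_mul_eq {a b c d : ℂ} (ha : 0 < a) (hb : 0 < b)
    (hc : 0 < c) (hd : 0 < d) (h : a * b = c * d) :
    Real.log a.re + Real.log b.re = Real.log c.re + Real.log d.re := by
  have hre : a.re * b.re = c.re * d.re := by
    simpa only [mul_re, ← (pos_iff.mp hb).2, ← (pos_iff.mp hd).2, mul_zero, sub_zero]
      using congrArg re h
  rw [← Real.log_mul (pos_iff.mp ha).1.ne' (pos_iff.mp hb).1.ne',
    ← Real.log_mul (pos_iff.mp hc).1.ne' (pos_iff.mp hd).1.ne', hre]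

theorem kkt_logdet_characterization_general
    {n : ℕ} (S C ZR ZD Λ₁ Λ₂ : Matrix (Fin n) (Fin n) ℂ)
    (hS : S.PosSemidef) (hC : C.PosSemidef)
    (hZR : ZR.PosDef) (hZD : ZD.PosDef)
    (hΛ₁ : Λ₁.PosSemidef)
    (hStat : (C + ZD)⁻¹ + Λ₁ = (C + ZR)⁻¹ + Λ₂)
    (hCS1 : C * Λ₁ = 0) (hCS2 : (S - C) * Λ₂ = 0)
    (Z : Matrix (Fin n) (Fin n) ℂ) (hZ : Z = (ZD⁻¹ + Λ₁)⁻¹) :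
    Real.log (C + ZD).det.re - Real.log (C + ZR).det.re =
      Real.log (S + Z).det.re - Real.log Z.det.re
        - Real.log (S + ZR).det.re + Real.log ZD.det.re := by
  have unit {M : Matrix (Fin n) (Fin n) ℂ} (hM : M.PosDef) : IsUnit M.det := hM.det_pos.ne'.isUnit
  have hW : (ZD⁻¹ + Λ₁).PosDef := hZD.inv.add_posSemidef hΛ₁
  have hZpd : Z.PosDef := hZ ▸ hW.inv
  have hCZ := PosDef.posSemidef_add hC hZpd
  have hCZD := PosDef.posSemidef_add hC hZD
  have hCZR := PosDef.posSemidef_add hC hZR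
  have hSZ := PosDef.posSemidef_add hS hZpd
  have hSZR := PosDef.posSemidef_add hS hZR
  have hZinv : Z⁻¹ = ZD⁻¹ + Λ₁ := by rw [hZ, nonsing_inv_nonsing_inv _ (unit hW)]
  have hCZinv : (C + Z)⁻¹ = (C + ZR)⁻¹ + Λ₂ :=
    hStat ▸ inv_add_eq_of_inv_eq_inv_add (unit hZpd) (unit hZD) (unit hCZD) hZinv hCS1
      ((IsHermitian.mul_eq_zero_comm hC.isHermitian hΛ₁.isHermitian).mp hCS1)
  have hdet₁ := det_add_mul_det_eq_of_inv_eq_inv_add (unit hZpd) (unit hZD) hZinv hCS1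
  have hdet₂ := det_add_mul_det_eq_of_inv_eq_inv_add (unit hCZ) (unit hCZR) hCZinv hCS2
  rw [← add_assoc, ← add_assoc, sub_add_cancel] at hdet₂
  have hlog₁ := Complex.log_re_add_log_re_eq_of_mul_eq hCZ.det_pos hZD.det_pos hCZD.det_pos
    hZpd.det_pos hdet₁
  have hlog₂ := Complex.log_re_add_log_re_eq_of_mul_eq hSZ.det_pos hCZR.det_pos hSZR.det_pos
    hCZ.det_pos hdet₂
  linarith

theorem kkt_logdet_characterization
    {n : ℕ} (S C ZR ZD Λ₁ Λ₂ : Matrix (Fin n) (Fin n) ℂ)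
    (hS : S.PosSemidef) (hC : C.PosSemidef) (hCS : (S - C).PosSemidef)
    (hZR : ZR.PosDef) (hZD : ZD.PosDef)
    (hΛ₁ : Λ₁.PosSemidef) (hΛ₂ : Λ₂.PosSemidef)
    (hStat : (C + ZD)⁻¹ + Λ₁ = (C + ZR)⁻¹ + Λ₂)
    (hCS1 : C * Λ₁ = 0) (hCS2 : (S - C) * Λ₂ = 0)
    (Z : Matrix (Fin n) (Fin n) ℂ) (hZ : Z = (ZD⁻¹ + Λ₁)⁻¹) :
    Real.log (C + ZD).det.re - Real.log (C + ZR).det.re =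
      Real.log (S + Z).det.re - Real.log Z.det.re
        - Real.log (S + ZR).det.re + Real.log ZD.det.re :=
  kkt_logdet_characterization_general S C ZR ZD Λ₁ Λ₂ hS hC hZR hZD hΛ₁ hStat hCS1 hCS2 Z hZ
end

section
/- Let S be Hermitian positive semidefinite and let Z, Z' be Hermitian positive definite n×n matrices with Z ⪯ Z'. Then log(det(S + Z)/det(Z)) ≥ log(det(S + Z')/det(Z')). -/
/-!
With `T = √S`, the matrix determinant lemma gives `det (S + Z) / det Z = det (1 + T Z⁻¹ T)`.
Inversion is antitone on positive definite matrices, so `Z ⪯ Z'` gives `T Z'⁻¹ T ⪯ T Z⁻¹ T`,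
and it remains to see that `det` is monotone in the Loewner order. This follows from the same
determinant lemma, because `det (1 + P) ≥ 1` for `P ⪰ 0` (its eigenvalues are at least `1`).
-/

open Matrix ComplexOrder
open scoped MatrixOrder

namespace Matrix

variable {𝕜 n : Type*} [RCLike 𝕜] [Fintype n] [DecidableEq n]

theorem PosSemidef.one_le_det_one_add {M : Matrix n n 𝕜} (hM : M.PosSemidef) :
    1 ≤ det (1 + M) := by
  have h : 1 + M = cfc (fun x : ℝ ↦ 1 + x) M := by
    rw [cfc_add .., cfc_const_one .., cfc_id' ..]
  rw [h, hM.isHermitian.cfc_eq]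
  simp only [IsHermitian.cfc, det_map, det_diagonal, Function.comp_apply, map_add, map_one]
  exact Finset.one_le_prod fun i _ ↦
    le_add_of_nonneg_right (RCLike.ofReal_nonneg.mpr (hM.eigenvalues_nonneg i))

theorem PosDef.det_add_eq_det_mul_det_one_add {A D : Matrix n n 𝕜} (hA : A.PosDef)
    (hD : D.PosSemidef) :
    det (A + D) = det A * det (1 + CFC.sqrt D * A⁻¹ * CFC.sqrt D) := by
  conv_lhs => rw [← CFC.sqrt_mul_sqrt_self D hD.nonneg]
  exact det_add_mul _ _ ((isUnit_iff_isUnit_det A).mp hA.isUnit)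

theorem PosDef.det_le_det {A B : Matrix n n 𝕜} (hA : A.PosDef) (hAB : A ≤ B) :
    det A ≤ det B := by
  rw [← add_sub_cancel A B, hA.det_add_eq_det_mul_det_one_add (le_iff.mp hAB)]
  exact le_mul_of_one_le_right hA.det_pos.le <| PosSemidef.one_le_det_one_add <|
    LE.le.posSemidef <| conjugate_nonneg_of_nonneg hA.inv.posSemidef.nonneg (CFC.sqrt_nonneg _)

section L2Operator

-- The operator norm makes `Matrix n n ℂ` a C⋆-algebra, where inversion is antitone.
open scoped Matrix.Norms.L2Operator

theorem PosDef.inv_le_inv {A B : Matrix n n ℂ} (hA : A.PosDef) (hAB : A ≤ B) : B⁻¹ ≤ A⁻¹ := by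
  simpa only [nonsing_inv_eq_ringInverse] using
    CStarAlgebra.ringInverse_le_ringInverse hAB hA.isStrictlyPositive

end L2Operator

theorem PosDef.re_det_add_div_re_det {A D : Matrix n n ℂ} (hA : A.PosDef) (hD : D.PosSemidef) :
    (D + A).det.re / A.det.re = (1 + CFC.sqrt D * A⁻¹ * CFC.sqrt D).det.re := by
  obtain ⟨hre, him⟩ := Complex.lt_def.mp hA.det_pos
  rw [Complex.zero_re] at hre
  rw [add_comm, hA.det_add_eq_det_mul_det_one_add hD, Complex.mul_re, ← him, Complex.zero_im,
    zero_mul, sub_zero, mul_div_cancel_left₀ _ hre.ne']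

end Matrix

theorem rate_monotone_in_noise_general
    {n : ℕ} (S Z Z' : Matrix (Fin n) (Fin n) ℂ)
    (hS : S.PosSemidef) (hZ : Z.PosDef)
    (hle : (Z' - Z).PosSemidef) :
    Real.log ((S + Z).det.re / Z.det.re) ≥
      Real.log ((S + Z').det.re / Z'.det.re) := by
  have hZ' : Z'.PosDef := add_sub_cancel Z Z' ▸ hZ.add_posSemidef hle
  set T := CFC.sqrt S
  have hT : 0 ≤ T := CFC.sqrt_nonneg S
  have hM' : 0 ≤ T * Z'⁻¹ * T := conjugate_nonneg_of_nonneg hZ'.inv.posSemidef.nonneg hT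
  have hM'M : T * Z'⁻¹ * T ≤ T * Z⁻¹ * T :=
    conjugate_le_conjugate_of_nonneg (hZ.inv_le_inv hle) hT
  have hdet : (1 + T * Z'⁻¹ * T).det ≤ (1 + T * Z⁻¹ * T).det :=
    (PosDef.one.add_posSemidef hM'.posSemidef).det_le_det (add_le_add_right hM'M 1)
  have hpos : 0 < (1 + T * Z'⁻¹ * T).det.re :=
    zero_lt_one.trans_le (Complex.le_def.mp hM'.posSemidef.one_le_det_one_add).1
  rw [hZ.re_det_add_div_re_det hS, hZ'.re_det_add_div_re_det hS]
  exact Real.log_le_log hpos (Complex.le_def.mp hdet).1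

theorem rate_monotone_in_noise
    {n : ℕ} (S Z Z' : Matrix (Fin n) (Fin n) ℂ)
    (hS : S.PosSemidef) (hZ : Z.PosDef) (hZ' : Z'.PosDef)
    (hle : (Z' - Z).PosSemidef) :
    Real.log ((S + Z).det.re / Z.det.re) ≥
      Real.log ((S + Z').det.re / Z'.det.re) :=
  rate_monotone_in_noise_general S Z Z' hS hZ hle
end
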